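/- Let H = H_1 ⊕ H_0 ⊕ H_{−1} be an orthogonal decomposition of a complex Hilbert space and T = (T_1, …, T_n) a commuting row contraction on H whose characteristic function is a polynomial of degree at most m, such that each T_i is block upper triangular with respect to this decomposition (T_i H_1 ⊆ H_1 and T_i (H_1 ⊕ H_0) ⊆ H_1 ⊕ H_0). Assume the compression tuple N'_i := P_{H_0} T_i|_{H_0} satisfies P_{H_0} T^α|_{H_0} = 0 for all α with |α| ≥ m (N' is nilpotent of order at most m), and the compression tuple W'_i := P_{H_{−1}} T_i|_{H_{−1}} satisfies ∑_{i=1}^n W'_i W'_i* = I_{H_{−1}} (W' is a spherical co-isometry). Then M ⊆ H_1 and H_{−1} ⊆ H_c, where M is the closure of the span of {T^α D_{T*} h : h ∈ H, |α| ≥ m} and H_c := {h ∈ H : ∑_{|α|=k} γ_α ‖T^{*α} h‖² = ‖h‖² for all k ∈ ℕ}. -/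

import Mathlib

open scoped InnerProductSpace

set_option maxHeartbeats 1000000
set_option synthInstance.maxHeartbeats 400000

noncomputable section

namespace RowContr

instance {n : ℕ} {H : Type*} [NormedAddCommGroup H] [CompleteSpace H] :
    CompleteSpace (PiLp 2 fun _ : Fin n => H) :=
  inferInstance

/-- Ordered product `T^α = T 0 ^ α 0 ⬝ ⋯ ⬝ T (n-1) ^ α (n-1)`
(for commuting tuples the order is immaterial). -/
def mpow {n : ℕ} {H : Type*} [NormedAddCommGroup H] [InnerProductSpace ℂ H]
    (T : Fin n → H →L[ℂ] H) (α : Fin n → ℕ) : H →L[ℂ] H :=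
  (List.ofFn fun i => (T i) ^ (α i)).prod

/-- The finset of all multi-indices `α : Fin n → ℕ` with `|α| = k`. -/
def multiIdx (n k : ℕ) : Finset (Fin n → ℕ) :=
  (Fintype.piFinset fun _ : Fin n => Finset.range (k + 1)).filter fun α => ∑ i, α i = k

/-- The row operator `E^n → F` associated with a tuple of operators, acting on the
Hilbert direct sum `PiLp 2`. -/
def rowOp {n : ℕ} {E F : Type*} [NormedAddCommGroup E] [InnerProductSpace ℂ E]
    [NormedAddCommGroup F] [InnerProductSpace ℂ F]
    (T : Fin n → E →L[ℂ] F) : PiLp 2 (fun _ : Fin n => E) →L[ℂ] F :=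
  ∑ i, (T i).comp (PiLp.proj 2 (fun _ : Fin n => E) i)

/-- The `α`-th Taylor coefficient of the characteristic function of `T`, where `Dstar`
plays the role of the defect operator `D_{T*}` and `D` the role of `D_T`:
`θ_{T,α} = ∑_{j : α_j ≥ 1} γ_{α-e_j} • D_{T*} T^{*(α-e_j)} P_j D_T`. -/
def charCoeff {n : ℕ} {H : Type*} [NormedAddCommGroup H] [InnerProductSpace ℂ H]
    [CompleteSpace H] (T : Fin n → H →L[ℂ] H) (Dstar : H →L[ℂ] H)
    (D : PiLp 2 (fun _ : Fin n => H) →L[ℂ] PiLp 2 (fun _ : Fin n => H))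
    (α : Fin n → ℕ) : PiLp 2 (fun _ : Fin n => H) →L[ℂ] H :=
  ∑ j ∈ Finset.univ.filter (fun j => 0 < α j),
    (Nat.multinomial Finset.univ (α - Pi.single j 1) : ℂ) •
      (Dstar ∘L (star (mpow T (α - Pi.single j 1))) ∘L (PiLp.proj 2 (fun _ : Fin n => H) j) ∘L D)

/-- The closure of the span of `{T^α D_{T*} h : h ∈ H, |α| ≥ m}`. -/
def rangeSpanGE {n : ℕ} {H : Type*} [NormedAddCommGroup H] [InnerProductSpace ℂ H]
    (T : Fin n → H →L[ℂ] H) (Dstar : H →L[ℂ] H) (m : ℕ) : Submodule ℂ H :=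
  (Submodule.span ℂ
    {x : H | ∃ (α : Fin n → ℕ) (h : H), m ≤ ∑ i, α i ∧ x = mpow T α (Dstar h)}).topologicalClosure

/-- The closure of the span of `{T^α D_{T*} h : h ∈ H, |α| = m}`. -/
def rangeSpanEQ {n : ℕ} {H : Type*} [NormedAddCommGroup H] [InnerProductSpace ℂ H]
    (T : Fin n → H →L[ℂ] H) (Dstar : H →L[ℂ] H) (m : ℕ) : Submodule ℂ H :=
  (Submodule.span ℂ
    {x : H | ∃ (α : Fin n → ℕ) (h : H), ∑ i, α i = m ∧ x = mpow T α (Dstar h)}).topologicalClosure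

/-- The closure of the span of `{T^α D_{T*} h : h ∈ H, α ∈ ℕ^n}`. -/
def rangeSpanAll {n : ℕ} {H : Type*} [NormedAddCommGroup H] [InnerProductSpace ℂ H]
    (T : Fin n → H →L[ℂ] H) (Dstar : H →L[ℂ] H) : Submodule ℂ H :=
  (Submodule.span ℂ
    {x : H | ∃ (α : Fin n → ℕ) (h : H), x = mpow T α (Dstar h)}).topologicalClosure

/-- The set `H_c = {h ∈ H : ∑_{|α| = k} γ_α ‖T^{*α} h‖² = ‖h‖² for all k ∈ ℕ}`. -/
def Hc {n : ℕ} {H : Type*} [NormedAddCommGroup H] [InnerProductSpace ℂ H] [CompleteSpace H]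
    (T : Fin n → H →L[ℂ] H) : Set H :=
  {h : H | ∀ k : ℕ, ∑ α ∈ multiIdx n k,
    (Nat.multinomial Finset.univ α : ℝ) * ‖star (mpow T α) h‖ ^ 2 = ‖h‖ ^ 2}

/-!
Block triangularity makes `H₋₁ = (H₁ ⊕ H₀)ᗮ` invariant under every `Tᵢ*`, and the co-isometry
condition on the compression `W'` then reads `∑ ‖Tᵢ* v‖² = ‖v‖²` for `v ∈ H₋₁`. Hence
`‖D_{T*} v‖² = ‖v‖² - ∑ ‖Tᵢ* v‖² = 0` on `H₋₁`, so `D_{T*}` maps into `H₁ ⊕ H₀`. For `a ∈ H₁`,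
`b ∈ H₀` and `|α| ≥ m`, `T^α a` stays in `H₁` and `T^α b ∈ H₁ ⊕ H₀` has no `H₀`-component by the
nilpotency of `N'`, which gives `M ⊆ H₁`.

For `H₋₁ ⊆ H_c`, the multinomial identity `(βᵢ + 1) γ_{β + eᵢ} = (|β| + 1) γ_β` turns
`∑_{|α| = k+1} γ_α ‖T^{*α} v‖²` into `∑ᵢ ∑_{|β| = k} γ_β ‖T^{*β} Tᵢ* v‖²`, and induction on `k`
uses that the row `(Tᵢ*)` maps `H₋₁` isometrically into `H₋₁ⁿ`.
-/

section MultiIndex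

variable {n : ℕ}

open scoped Nat

lemma mem_multiIdx {k : ℕ} {α : Fin n → ℕ} : α ∈ multiIdx n k ↔ ∑ i, α i = k := by
  refine Finset.mem_filter.trans ⟨And.right, fun h => ⟨Fintype.mem_piFinset.mpr fun i => ?_, h⟩⟩
  exact Finset.mem_range_succ_iff.mpr (h ▸ Finset.single_le_sum (by simp) (Finset.mem_univ i))

lemma multiIdx_zero : multiIdx n 0 = {0} := by
  ext α
  simp [mem_multiIdx, Finset.sum_eq_zero_iff, funext_iff]

lemma sum_add_single (β : Fin n → ℕ) (i : Fin n) :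
    ∑ j, (β + Pi.single i 1 : Fin n → ℕ) j = ∑ j, β j + 1 := by
  simp [Finset.sum_add_distrib]

lemma succ_mul_multinomial_add_single (β : Fin n → ℕ) (i : Fin n) :
    (β i + 1) * Nat.multinomial Finset.univ (β + Pi.single i 1)
      = (∑ j, β j + 1) * Nat.multinomial Finset.univ β := by
  have hfact : ∏ j, ((β + Pi.single i 1 : Fin n → ℕ) j)! = (β i + 1) * ∏ j, (β j)! := by
    rw [← Finset.mul_prod_erase _ _ (Finset.mem_univ i),
      ← Finset.mul_prod_erase _ (fun j => (β j)!) (Finset.mem_univ i)]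
    have herase : ∀ j ∈ Finset.univ.erase i, ((β + Pi.single i 1 : Fin n → ℕ) j)! = (β j)! :=
      fun j hj => by simp [Pi.single_eq_of_ne (Finset.ne_of_mem_erase hj)]
    rw [Finset.prod_congr rfl herase]
    simp [Nat.factorial_succ, mul_assoc]
  apply Nat.eq_of_mul_eq_mul_left (Finset.prod_pos fun j _ => (β j).factorial_pos)
  rw [mul_left_comm, ← mul_assoc, ← hfact, Nat.multinomial_spec, sum_add_single,
    mul_left_comm, Nat.multinomial_spec, Nat.factorial_succ]

lemma sum_multiIdx_add_single {M : Type*} [AddCommMonoid M] (i : Fin n) (k : ℕ)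
    (g : (Fin n → ℕ) → M) (hg : ∀ α, α i = 0 → g α = 0) :
    ∑ β ∈ multiIdx n k, g (β + Pi.single i 1) = ∑ α ∈ multiIdx n (k + 1), g α := by
  rw [← Finset.sum_image fun β _ γ _ => (add_left_injective (Pi.single i 1 : Fin n → ℕ)).eq_iff.mp]
  refine Finset.sum_subset ?_ fun α hα hα' => hg α ?_
  · simp only [Finset.subset_iff, Finset.mem_image, mem_multiIdx]
    rintro _ ⟨β, hβ, rfl⟩
    rw [sum_add_single, hβ]
  · by_contra hi
    have hle : (Pi.single i 1 : Fin n → ℕ) ≤ α := fun j => by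
      by_cases hj : j = i <;> simp [hj]; omega
    have hα_eq := tsub_add_cancel_of_le hle
    refine hα' (Finset.mem_image.mpr ⟨α - Pi.single i 1, mem_multiIdx.mpr ?_, hα_eq⟩)
    have hsum := mem_multiIdx.mp hα
    rw [← hα_eq, sum_add_single] at hsum
    omega

lemma sum_multiIdx_succ (k : ℕ) (f : (Fin n → ℕ) → ℝ) :
    ∑ α ∈ multiIdx n (k + 1), (Nat.multinomial Finset.univ α : ℝ) * f α
      = ∑ i, ∑ β ∈ multiIdx n k,
          (Nat.multinomial Finset.univ β : ℝ) * f (β + Pi.single i 1) := by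
  refine mul_left_cancel₀ (Nat.cast_add_one_ne_zero k) ?_
  calc ((k : ℝ) + 1) * ∑ α ∈ multiIdx n (k + 1), (Nat.multinomial Finset.univ α : ℝ) * f α
      = ∑ i, ∑ α ∈ multiIdx n (k + 1),
          (α i : ℝ) * Nat.multinomial Finset.univ α * f α := by
        rw [Finset.sum_comm, Finset.mul_sum]
        refine Finset.sum_congr rfl fun α hα => ?_
        rw [← Finset.sum_mul, ← Finset.sum_mul, ← Nat.cast_sum, mem_multiIdx.mp hα, mul_assoc]
        push_cast; rfl
    _ = ∑ i, ∑ β ∈ multiIdx n k, ((β + Pi.single i 1 : Fin n → ℕ) i : ℝ) *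
          Nat.multinomial Finset.univ (β + Pi.single i 1) * f (β + Pi.single i 1) := by
        refine Finset.sum_congr rfl fun i _ => (sum_multiIdx_add_single i k _ ?_).symm
        intro α hα; simp [hα]
    _ = ((k : ℝ) + 1) * ∑ i, ∑ β ∈ multiIdx n k,
          (Nat.multinomial Finset.univ β : ℝ) * f (β + Pi.single i 1) := by
        simp only [Finset.mul_sum]
        refine Finset.sum_congr rfl fun i _ => Finset.sum_congr rfl fun β hβ => ?_
        have h := succ_mul_multinomial_add_single β i
        rw [mem_multiIdx.mp hβ] at h
        have h' := congrArg (Nat.cast : ℕ → ℝ) h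
        push_cast at h'
        simp only [Pi.add_apply, Pi.single_eq_same, Nat.cast_add, Nat.cast_one, h', mul_assoc]

end MultiIndex

section MultiPower

variable {n : ℕ} {H : Type*} [NormedAddCommGroup H] [InnerProductSpace ℂ H]

lemma mpow_succ (T : Fin (n + 1) → H →L[ℂ] H) (α : Fin (n + 1) → ℕ) :
    mpow T α = T 0 ^ α 0 * mpow (fun i => T i.succ) (fun i => α i.succ) := by
  simp [mpow, List.ofFn_succ]

@[simp]
lemma mpow_zero (T : Fin n → H →L[ℂ] H) : mpow T 0 = 1 := by
  simp [mpow]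

lemma Commute.mpow_right {B : H →L[ℂ] H} {T : Fin n → H →L[ℂ] H} (hB : ∀ i, Commute B (T i))
    (α : Fin n → ℕ) : Commute B (mpow T α) :=
  Commute.list_prod_right _ _ fun _ hx => by
    obtain ⟨i, rfl⟩ := List.mem_ofFn.mp hx
    exact (hB i).pow_right _

lemma mpow_add {T : Fin n → H →L[ℂ] H} (hT : ∀ i j, Commute (T i) (T j)) (α β : Fin n → ℕ) :
    mpow T (α + β) = mpow T α * mpow T β := by
  induction n with
  | zero => simp [mpow]
  | succ n ih =>
    have hc : Commute (T 0 ^ β 0) (mpow (fun i => T i.succ) (fun i => α i.succ)) :=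
      (Commute.mpow_right (fun i => hT 0 i.succ) _).pow_left _
    rw [mpow_succ, mpow_succ T α, mpow_succ T β, Pi.add_apply, pow_add,
      show (fun i : Fin n => (α + β) i.succ) = (fun i => α i.succ) + fun i => β i.succ from rfl,
      ih fun i j => hT _ _, mul_assoc, mul_assoc, ← mul_assoc (T 0 ^ β 0), hc.eq, mul_assoc]

lemma mpow_single (T : Fin n → H →L[ℂ] H) (i : Fin n) : mpow T (Pi.single i 1) = T i := by
  induction n with
  | zero => exact i.elim0
  | succ n ih =>
    rw [mpow_succ]
    induction i using Fin.cases with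
    | zero => simp [← Pi.zero_def]
    | succ i =>
      have hsucc : (fun j : Fin n => (Pi.single i.succ 1 : Fin (n + 1) → ℕ) j.succ)
          = Pi.single i 1 := funext fun j => by simp [Pi.single_apply]
      simp [hsucc, ih]

lemma star_mpow [CompleteSpace H] {T : Fin n → H →L[ℂ] H} (hT : ∀ i j, Commute (T i) (T j))
    (α : Fin n → ℕ) :
    star (mpow T α) = mpow (fun i => star (T i)) α := by
  induction n with
  | zero => simp [mpow]
  | succ n ih =>
    rw [mpow_succ, star_mul, star_pow, ih fun i j => hT _ _, mpow_succ]
    exact ((Commute.mpow_right (fun i => (hT 0 i.succ).star_star) _).pow_left _).symm.eq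

lemma mpow_mem {T : Fin n → H →L[ℂ] H} {S : Submodule ℂ H} (hS : ∀ i, ∀ x ∈ S, T i x ∈ S)
    (α : Fin n → ℕ) {x : H} (hx : x ∈ S) : mpow T α x ∈ S := by
  let stabilizer : Submonoid (H →L[ℂ] H) :=
    { carrier := {B | ∀ y ∈ S, B y ∈ S}
      mul_mem' := fun hA hB y hy => hA _ (hB y hy)
      one_mem' := fun _ hy => hy }
  have : mpow T α ∈ stabilizer := Submonoid.list_prod_mem _ fun B hB => by
    obtain ⟨i, rfl⟩ := List.mem_ofFn.mp hB
    exact pow_mem (show T i ∈ stabilizer from hS i) _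
  exact this x hx

end MultiPower

section Orthogonal

variable {𝕜 E : Type*} [RCLike 𝕜] [NormedAddCommGroup E] [InnerProductSpace 𝕜 E]

lemma _root_.Submodule.IsOrtho.mem_of_mem_sup_of_mem_orthogonal {U V : Submodule 𝕜 E}
    (hUV : U ⟂ V) {w : E} (hw : w ∈ U ⊔ V) (hwV : w ∈ Vᗮ) : w ∈ U := by
  obtain ⟨u, hu, v, hv, rfl⟩ := Submodule.mem_sup.mp hw
  have hvv : ⟪v, v⟫_𝕜 = 0 := by
    simpa [inner_add_right, hUV.symm.inner_eq hv hu] using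
      Submodule.inner_right_of_mem_orthogonal hv hwV
  simpa [inner_self_eq_zero.mp hvv] using hu

lemma _root_.Submodule.IsOrtho.orthogonal_eq_of_sup_eq_top {U V : Submodule 𝕜 E}
    (hUV : U ⟂ V) (htop : U ⊔ V = ⊤) : Uᗮ = V :=
  le_antisymm (fun _ hw => hUV.symm.mem_of_mem_sup_of_mem_orthogonal
    (by rw [sup_comm, htop]; trivial) hw) hUV.ge

lemma inner_apply_eq_of_sub_mem_orthogonal {K : Submodule 𝕜 E} {P : E → E}
    (hP : ∀ h, h - P h ∈ Kᗮ) {v : E} (hv : v ∈ K) (z : E) : ⟪v, P z⟫_𝕜 = ⟪v, z⟫_𝕜 := by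
  have h := Submodule.inner_right_of_mem_orthogonal hv (hP z)
  rwa [inner_sub_right, sub_eq_zero, eq_comm] at h

lemma adjoint_mem_orthogonal [CompleteSpace E] {A : E →L[𝕜] E} {K : Submodule 𝕜 E}
    (hK : ∀ x ∈ K, A x ∈ K) {y : E} (hy : y ∈ Kᗮ) : A.adjoint y ∈ Kᗮ := fun u hu => by
  rw [ContinuousLinearMap.adjoint_inner_right]
  exact hy _ (hK u hu)

end Orthogonal

section RowContraction

variable {𝕜 E ι : Type*} [RCLike 𝕜] [NormedAddCommGroup E] [InnerProductSpace 𝕜 E]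
  [CompleteSpace E] [Fintype ι]

lemma norm_sq_defect_apply {T : ι → E →L[𝕜] E} {D : E →L[𝕜] E} (hD : IsSelfAdjoint D)
    (hD2 : D ∘L D = 1 - ∑ i, T i ∘L star (T i)) (v : E) :
    ‖D v‖ ^ 2 = ‖v‖ ^ 2 - ∑ i, ‖star (T i) v‖ ^ 2 := by
  have hTi : ∀ i, ‖star (T i) v‖ ^ 2 = RCLike.re ⟪v, T i (star (T i) v)⟫_𝕜 := fun i => by
    rw [ContinuousLinearMap.apply_norm_sq_eq_inner_adjoint_right,
      ← ContinuousLinearMap.star_eq_adjoint, star_star]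
    rfl
  rw [ContinuousLinearMap.apply_norm_sq_eq_inner_adjoint_right, hD.adjoint_eq, hD2,
    sub_apply, inner_sub_right, map_sub, one_apply_eq_self,
    inner_self_eq_norm_sq, sum_apply, inner_sum, map_sum]
  simp only [hTi, ContinuousLinearMap.comp_apply]

lemma sum_norm_sq_adjoint_eq {T : ι → E →L[𝕜] E} {K : Submodule 𝕜 E} {P : E →L[𝕜] E}
    (hP : ∀ h, h - P h ∈ Kᗮ) (hK : ∀ i, ∀ x ∈ K, star (T i) x ∈ K)
    (hW : ∀ x ∈ K, ∑ i, P (T i (P (star (T i) x))) = x) {x : E} (hx : x ∈ K) :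
    ∑ i, ‖star (T i) x‖ ^ 2 = ‖x‖ ^ 2 := by
  apply RCLike.ofReal_injective (K := 𝕜)
  push_cast
  simp only [← inner_self_eq_norm_sq_to_K]
  calc ∑ i, ⟪star (T i) x, star (T i) x⟫_𝕜
      = ∑ i, ⟪x, P (T i (P (star (T i) x)))⟫_𝕜 := Finset.sum_congr rfl fun i _ => by
        rw [inner_apply_eq_of_sub_mem_orthogonal hP hx,
          ← ContinuousLinearMap.adjoint_inner_left (T i), ← ContinuousLinearMap.star_eq_adjoint,
          inner_apply_eq_of_sub_mem_orthogonal hP (hK i x hx)]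
    _ = ⟪x, x⟫_𝕜 := by rw [← inner_sum, hW x hx]

lemma defect_apply_mem_orthogonal {T : ι → E →L[𝕜] E} {D : E →L[𝕜] E} (hD : IsSelfAdjoint D)
    (hD2 : D ∘L D = 1 - ∑ i, T i ∘L star (T i)) {K : Submodule 𝕜 E}
    (hK : ∀ x ∈ K, ∑ i, ‖star (T i) x‖ ^ 2 = ‖x‖ ^ 2) (h : E) : D h ∈ Kᗮ := fun v hv => by
  have hDv : D v = 0 := by
    simpa [hK v hv] using norm_sq_defect_apply hD hD2 v
  rw [← hD.adjoint_eq, ContinuousLinearMap.adjoint_inner_right, hDv, inner_zero_left]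

end RowContraction

section Invariance

variable {n : ℕ} {H : Type*} [NormedAddCommGroup H] [InnerProductSpace ℂ H]

lemma mpow_mem_of_compression_eq_zero {T : Fin n → H →L[ℂ] H} {U V : Submodule ℂ H}
    (hUV : U ⟂ V) (hU : ∀ i, ∀ x ∈ U, T i x ∈ U) (hUsupV : ∀ i, ∀ x ∈ U ⊔ V, T i x ∈ U ⊔ V)
    {P : H →L[ℂ] H} (hP : ∀ h, h - P h ∈ Vᗮ) {α : Fin n → ℕ}
    (hα : ∀ x ∈ V, P (mpow T α x) = 0) {x : H} (hx : x ∈ U ⊔ V) : mpow T α x ∈ U := by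
  obtain ⟨u, hu, v, hv, rfl⟩ := Submodule.mem_sup.mp hx
  have hv_perp : mpow T α v ∈ Vᗮ := by simpa [hα v hv] using hP (mpow T α v)
  rw [map_add]
  exact add_mem (mpow_mem hU α hu) (hUV.mem_of_mem_sup_of_mem_orthogonal
    (mpow_mem hUsupV α (Submodule.mem_sup_right hv)) hv_perp)

lemma sum_multinomial_norm_sq_mpow_eq {A : Fin n → H →L[ℂ] H}
    (hA : ∀ i j, Commute (A i) (A j)) {S : Submodule ℂ H} (hS : ∀ i, ∀ v ∈ S, A i v ∈ S)
    (hiso : ∀ v ∈ S, ∑ i, ‖A i v‖ ^ 2 = ‖v‖ ^ 2) (k : ℕ) {v : H} (hv : v ∈ S) :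
    ∑ α ∈ multiIdx n k, (Nat.multinomial Finset.univ α : ℝ) * ‖mpow A α v‖ ^ 2 = ‖v‖ ^ 2 := by
  induction k generalizing v with
  | zero => simp [multiIdx_zero, Nat.multinomial]
  | succ k ih =>
    have hshift : ∀ i β, mpow A (β + Pi.single i 1) v = mpow A β (A i v) := fun i β => by
      rw [mpow_add hA, mpow_single, mul_apply_eq_comp]
    simp only [sum_multiIdx_succ, hshift, ih (hS _ v hv), hiso v hv]

end Invariance

theorem statement_14_general {n : ℕ} {H : Type*} [NormedAddCommGroup H] [InnerProductSpace ℂ H]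
    [CompleteSpace H]
    (T : Fin n → H →L[ℂ] H) (m : ℕ)
    (hcomm : ∀ i j, Commute (T i) (T j))
    (Dstar : H →L[ℂ] H) (hD1 : Dstar.IsPositive)
    (hD2 : Dstar ∘L Dstar = 1 - ∑ i, T i ∘L star (T i))
    (H1 H0 Hm1 : Submodule ℂ H)
    (hH1 : IsClosed (H1 : Set H))
    (ho10 : ∀ x ∈ H1, ∀ y ∈ H0, ⟪x, y⟫_ℂ = 0)
    (ho1m : ∀ x ∈ H1, ∀ y ∈ Hm1, ⟪x, y⟫_ℂ = 0)
    (ho0m : ∀ x ∈ H0, ∀ y ∈ Hm1, ⟪x, y⟫_ℂ = 0)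
    (hsup : H1 ⊔ H0 ⊔ Hm1 = ⊤)
    (htri1 : ∀ i : Fin n, ∀ x ∈ H1, T i x ∈ H1)
    (htri10 : ∀ i : Fin n, ∀ x ∈ H1 ⊔ H0, T i x ∈ H1 ⊔ H0)
    (Pm1 : H →L[ℂ] H)
    (hPm1 : ∀ h : H, Pm1 h ∈ Hm1 ∧ h - Pm1 h ∈ Hm1ᗮ)
    (hW : ∀ x ∈ Hm1, ∑ i, Pm1 (T i (Pm1 (star (T i) x))) = x)
    (P0 : H →L[ℂ] H)
    (hP0 : ∀ h : H, P0 h ∈ H0 ∧ h - P0 h ∈ H0ᗮ)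
    (hnil : ∀ α : Fin n → ℕ, m ≤ ∑ i, α i → ∀ x ∈ H0, P0 (mpow T α x) = 0) :
    rangeSpanGE T Dstar m ≤ H1 ∧ (Hm1 : Set H) ⊆ Hc T := by
  have hK : H1 ⊔ H0 ⟂ Hm1 := Submodule.isOrtho_sup_left.mpr
    ⟨Submodule.isOrtho_iff_inner_eq.mpr ho1m, Submodule.isOrtho_iff_inner_eq.mpr ho0m⟩
  have hm1 : (H1 ⊔ H0)ᗮ = Hm1 := hK.orthogonal_eq_of_sup_eq_top hsup
  have hstar : ∀ i, ∀ v ∈ Hm1, star (T i) v ∈ Hm1 := fun i v hv => by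
    rw [← hm1] at hv ⊢
    rw [ContinuousLinearMap.star_eq_adjoint]
    exact adjoint_mem_orthogonal (htri10 i) hv
  have hiso : ∀ v ∈ Hm1, ∑ i, ‖star (T i) v‖ ^ 2 = ‖v‖ ^ 2 := fun v hv =>
    sum_norm_sq_adjoint_eq (fun h => (hPm1 h).2) hstar hW hv
  have hDstar : ∀ h, Dstar h ∈ H1 ⊔ H0 := fun h => by
    rw [← hK.symm.orthogonal_eq_of_sup_eq_top (by rwa [sup_comm])]
    exact defect_apply_mem_orthogonal hD1.isSelfAdjoint hD2 hiso h
  refine ⟨Submodule.topologicalClosure_minimal _ (Submodule.span_le.mpr ?_) hH1, ?_⟩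
  · rintro _ ⟨α, h, hα, rfl⟩
    exact mpow_mem_of_compression_eq_zero (Submodule.isOrtho_iff_inner_eq.mpr ho10) htri1
      htri10 (fun h => (hP0 h).2) (hnil α hα) (hDstar h)
  · intro v hv k
    simp only [star_mpow hcomm]
    exact sum_multinomial_norm_sq_mpow_eq (fun i j => (hcomm i j).star_star) hstar hiso k hv

theorem statement_14 {n : ℕ} {H : Type*} [NormedAddCommGroup H] [InnerProductSpace ℂ H]
    [CompleteSpace H]
    (T : Fin n → H →L[ℂ] H) (m : ℕ)
    (hcomm : ∀ i j, Commute (T i) (T j))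
    (hrow : ((1 : H →L[ℂ] H) - ∑ i, T i ∘L star (T i)).IsPositive)
    (Dstar : H →L[ℂ] H) (hD1 : Dstar.IsPositive)
    (hD2 : Dstar ∘L Dstar = 1 - ∑ i, T i ∘L star (T i))
    (D : PiLp 2 (fun _ : Fin n => H) →L[ℂ] PiLp 2 (fun _ : Fin n => H))
    (hDT1 : D.IsPositive)
    (hDT2 : D ∘L D = 1 - (ContinuousLinearMap.adjoint (rowOp T)) ∘L rowOp T)
    (hpoly : ∀ β : Fin n → ℕ, m < ∑ i, β i → charCoeff T Dstar D β = 0)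
    (H1 H0 Hm1 : Submodule ℂ H)
    (hH1 : IsClosed (H1 : Set H)) (hH0 : IsClosed (H0 : Set H))
    (hHm1 : IsClosed (Hm1 : Set H))
    (ho10 : ∀ x ∈ H1, ∀ y ∈ H0, ⟪x, y⟫_ℂ = 0)
    (ho1m : ∀ x ∈ H1, ∀ y ∈ Hm1, ⟪x, y⟫_ℂ = 0)
    (ho0m : ∀ x ∈ H0, ∀ y ∈ Hm1, ⟪x, y⟫_ℂ = 0)
    (hsup : H1 ⊔ H0 ⊔ Hm1 = ⊤)
    (htri1 : ∀ i : Fin n, ∀ x ∈ H1, T i x ∈ H1)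
    (htri10 : ∀ i : Fin n, ∀ x ∈ H1 ⊔ H0, T i x ∈ H1 ⊔ H0)
    (Pm1 : H →L[ℂ] H)
    (hPm1 : ∀ h : H, Pm1 h ∈ Hm1 ∧ h - Pm1 h ∈ Hm1ᗮ)
    (hW : ∀ x ∈ Hm1, ∑ i, Pm1 (T i (Pm1 (star (T i) x))) = x)
    (P0 : H →L[ℂ] H)
    (hP0 : ∀ h : H, P0 h ∈ H0 ∧ h - P0 h ∈ H0ᗮ)
    (hnil : ∀ α : Fin n → ℕ, m ≤ ∑ i, α i → ∀ x ∈ H0, P0 (mpow T α x) = 0) :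
    rangeSpanGE T Dstar m ≤ H1 ∧ (Hm1 : Set H) ⊆ Hc T :=
  statement_14_general T m hcomm Dstar hD1 hD2 H1 H0 Hm1 hH1 ho10 ho1m ho0m hsup htri1 htri10 Pm1
    hPm1 hW P0 hP0 hnil

end RowContr
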